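/- Let 𝔑 be a factor (von Neumann algebra with trivial center) on a Hilbert space ℋ. Then for any nonzero operators A ∈ 𝔑 and A' ∈ 𝔑' (the commutant), the product AA' is nonzero. -/

import Mathlib

open scoped InnerProductSpace

/-- A von Neumann algebra (given by its carrier set of bounded operators) is a factor:
its center consists of scalar multiples of the identity. -/
def IsFactorSet {H : Type*} [NormedAddCommGroup H] [InnerProductSpace ℂ H] [CompleteSpace H]
    (S : Set (H →L[ℂ] H)) : Prop :=
  ∀ x ∈ S, (∀ y ∈ S, x * y = y * x) → ∃ c : ℂ, x = c • (1 : H →L[ℂ] H)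

/-!
Suppose `A * A' = 0` and let `K` be the closed span of `𝔑' A' ℋ`. It is invariant under `𝔑'`,
and also under `𝔑`, which commutes with `𝔑'` and with `A'`. Hence the projection onto `K` lies in
`𝔑'' ∩ 𝔑' = 𝔑 ∩ 𝔑'`, so it is a scalar; it is nonzero because `A' ≠ 0`, so `K = ℋ`. But `A`
commutes with `𝔑'` and kills `A' ℋ`, so `A` vanishes on `K`.
-/

open scoped Pointwise

namespace VonNeumannAlgebra

variable {H : Type*} [NormedAddCommGroup H] [InnerProductSpace ℂ H] [CompleteSpace H]

theorem starProjection_mem_iff (S : VonNeumannAlgebra H) (K : Submodule ℂ H)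
    [K.HasOrthogonalProjection] :
    K.starProjection ∈ S ↔ ∀ T ∈ S.commutant, K ∈ Module.End.invtSubmodule T := by
  rw [IsStarProjection.mem_iff isStarProjection_starProjection, K.range_starProjection]

/-- The closed span `[M V]` of `{T v | T ∈ M, v ∈ V}`. -/
noncomputable def cyclicSubspace (M : VonNeumannAlgebra H) (V : Set H) : Submodule ℂ H :=
  (Submodule.span ℂ ((M : Set (H →L[ℂ] H)) • V)).topologicalClosure

variable (M : VonNeumannAlgebra H) (V : Set H)

theorem isClosed_cyclicSubspace : IsClosed (M.cyclicSubspace V : Set H) :=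
  Submodule.isClosed_topologicalClosure _

instance : CompleteSpace (M.cyclicSubspace V) := (isClosed_cyclicSubspace M V).completeSpace_coe

theorem subset_cyclicSubspace : V ⊆ M.cyclicSubspace V := fun v hv =>
  Submodule.le_topologicalClosure _ <| Submodule.subset_span <|
    Set.mem_smul.2 ⟨1, one_mem M, v, hv, one_smul _ v⟩

@[simp]
theorem cyclicSubspace_zero : M.cyclicSubspace 0 = ⊥ := by
  refine eq_bot_iff.2 <| Submodule.topologicalClosure_minimal _ ?_ isClosed_singleton
  exact Submodule.span_le.2 ((Set.smul_zero_subset _).trans (by simp))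

theorem cyclicSubspace_mem_invtSubmodule {T : H →L[ℂ] H} (hT : T ∈ M) :
    M.cyclicSubspace V ∈ Module.End.invtSubmodule T := by
  refine Submodule.topologicalClosure_mem_invtSubmodule ?_
  rw [Module.End.mem_invtSubmodule, Submodule.span_le]
  rintro _ ⟨g, hg, v, hv, rfl⟩
  exact Submodule.subset_span <| Set.mem_smul.2 ⟨T * g, mul_mem hT hg, v, hv, rfl⟩

theorem cyclicSubspace_le_comap {T : H →L[ℂ] H} {W : Set H} (hT : T ∈ M.commutant)
    (hTV : Set.MapsTo T V W) :
    M.cyclicSubspace V ≤ (M.cyclicSubspace W).comap (T : H →ₗ[ℂ] H) := by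
  refine Submodule.topologicalClosure_minimal _ ?_
    ((isClosed_cyclicSubspace M W).preimage T.continuous)
  rw [Submodule.span_le]
  rintro _ ⟨g, hg, v, hv, rfl⟩
  have hgT : g (T v) = T (g v) := congr($((mem_commutant_iff.1 hT) g hg) v)
  exact Submodule.le_topologicalClosure _ <| Submodule.subset_span <|
    Set.mem_smul.2 ⟨g, hg, T v, hTV hv, hgT⟩

end VonNeumannAlgebra

theorem Submodule.eq_top_of_starProjection_eq_smul_one {𝕜 E : Type*} [RCLike 𝕜]
    [NormedAddCommGroup E] [InnerProductSpace 𝕜 E] {K : Submodule 𝕜 E}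
    [K.HasOrthogonalProjection] {c : 𝕜} (hc : K.starProjection = c • 1) (hK : K ≠ ⊥) :
    K = ⊤ := by
  obtain ⟨v, hvK, hv0⟩ := Submodule.exists_mem_ne_zero_of_ne_bot hK
  have hcv : c • v = v := by simpa [hc] using starProjection_eq_self_iff.2 hvK
  have hc1 : c = 1 := smul_left_injective 𝕜 hv0 (hcv.trans (one_smul 𝕜 v).symm)
  rw [← K.range_starProjection, hc, hc1, one_smul]
  exact LinearMap.range_id

open VonNeumannAlgebra in
theorem factor_mul_commutant_ne_zero {H : Type*} [NormedAddCommGroup H]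
    [InnerProductSpace ℂ H] [CompleteSpace H]
    (N : VonNeumannAlgebra H) (hfac : IsFactorSet (N : Set (H →L[ℂ] H)))
    (A A' : H →L[ℂ] H) (hA : A ∈ N) (hA' : A' ∈ N.commutant)
    (hA0 : A ≠ 0) (hA'0 : A' ≠ 0) : A * A' ≠ 0 := by
  intro hAA'
  set K := N.commutant.cyclicSubspace (Set.range A')
  have hKN (T) (hT : T ∈ N) : K ∈ Module.End.invtSubmodule T := by
    refine cyclicSubspace_le_comap _ _ (by rwa [commutant_commutant]) ?_
    rintro _ ⟨x, rfl⟩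
    exact ⟨T x, (congr($((mem_commutant_iff.1 hA') T hT) x)).symm⟩
  have hPN : K.starProjection ∈ N :=
    (starProjection_mem_iff N K).2 fun T hT => cyclicSubspace_mem_invtSubmodule _ _ hT
  have hPN' : K.starProjection ∈ N.commutant :=
    (starProjection_mem_iff _ K).2 (by rwa [commutant_commutant])
  obtain ⟨c, hc⟩ := hfac _ hPN fun T hT => ((mem_commutant_iff.1 hPN') T hT).symm
  have hK : K = ⊤ := by
    refine Submodule.eq_top_of_starProjection_eq_smul_one hc fun hKbot => hA'0 ?_
    ext x
    have hxK : A' x ∈ K := subset_cyclicSubspace _ _ (Set.mem_range_self x)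
    simpa [hKbot] using hxK
  have hAK : K ≤ LinearMap.ker (A : H →ₗ[ℂ] H) := by
    simpa using cyclicSubspace_le_comap _ (Set.range A') (by rwa [commutant_commutant]) <|
      show Set.MapsTo A (Set.range A') 0 by rintro _ ⟨x, rfl⟩; exact congr($hAA' x)
  exact hA0 <| ContinuousLinearMap.ext fun x => hAK (hK ▸ Submodule.mem_top)
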